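/- The axiom schemes R: A∧(A→B)→B and R_E: (A→(A→B))→(A→B) are equivalent over the logic F: the logics F + R and F + R_E have exactly the same theorems. -/
import Mathlib


/-- Implicational formulas: built from propositional variables using only `→`. -/
inductive Fm : Type
  | var : ℕ → Fm
  | imp : Fm → Fm → Fm

/-- `chain [A₁,…,Aₙ] E` is the formula `A₁→(A₂→(⋯→(Aₙ→E)⋯))` (and `E` when n = 0). -/
def chain : List Fm → Fm → Fm
  | [], E => E
  | A :: L, E => Fm.imp A (chain L E)

/-- Formulas of the full propositional language with `∧`, `∨`, `→`. -/
inductive Pf : Type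
  | var : ℕ → Pf
  | imp : Pf → Pf → Pf
  | and : Pf → Pf → Pf
  | or : Pf → Pf → Pf

/-- Theorems of the subintuitionistic logic `F`. -/
inductive FfullThm : Pf → Prop
  | ax1 (A B : Pf) : FfullThm (A.imp (A.or B))
  | ax2 (A B : Pf) : FfullThm (B.imp (A.or B))
  | ax3 (A B : Pf) : FfullThm ((A.and B).imp A)
  | ax4 (A B : Pf) : FfullThm ((A.and B).imp B)
  | ax7 (A B C : Pf) : FfullThm ((A.and (B.or C)).imp ((A.and B).or (A.and C)))
  | ax8 (A B C : Pf) : FfullThm (((A.imp B).and (B.imp C)).imp (A.imp C))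
  | ax9 (A B C : Pf) : FfullThm (((A.imp B).and (A.imp C)).imp (A.imp (B.and C)))
  | ax10 (A : Pf) : FfullThm (A.imp A)
  | ax11 (A B C : Pf) : FfullThm (((A.imp C).and (B.imp C)).imp ((A.or B).imp C))
  | adj {A B : Pf} : FfullThm A → FfullThm B → FfullThm (A.and B)
  | mp {A B : Pf} : FfullThm A → FfullThm (A.imp B) → FfullThm B
  | afort {A : Pf} (B : Pf) : FfullThm A → FfullThm (B.imp A)

/-- The embedding of the implicational language into the full propositional language. -/
def emb : Fm → Pf
  | Fm.var p => Pf.var p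
  | Fm.imp A B => (emb A).imp (emb B)

/-- Theorems of `F + R`, where `R : A∧(A→B)→B`. -/
inductive FRfullThm : Pf → Prop
  | ax1 (A B : Pf) : FRfullThm (A.imp (A.or B))
  | ax2 (A B : Pf) : FRfullThm (B.imp (A.or B))
  | ax3 (A B : Pf) : FRfullThm ((A.and B).imp A)
  | ax4 (A B : Pf) : FRfullThm ((A.and B).imp B)
  | ax7 (A B C : Pf) : FRfullThm ((A.and (B.or C)).imp ((A.and B).or (A.and C)))
  | ax8 (A B C : Pf) : FRfullThm (((A.imp B).and (B.imp C)).imp (A.imp C))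
  | ax9 (A B C : Pf) : FRfullThm (((A.imp B).and (A.imp C)).imp (A.imp (B.and C)))
  | ax10 (A : Pf) : FRfullThm (A.imp A)
  | ax11 (A B C : Pf) : FRfullThm (((A.imp C).and (B.imp C)).imp ((A.or B).imp C))
  | adj {A B : Pf} : FRfullThm A → FRfullThm B → FRfullThm (A.and B)
  | mp {A B : Pf} : FRfullThm A → FRfullThm (A.imp B) → FRfullThm B
  | afort {A : Pf} (B : Pf) : FRfullThm A → FRfullThm (B.imp A)
  | axR (A B : Pf) : FRfullThm ((A.and (A.imp B)).imp B)

/-- Theorems of `F + R_E`, where `R_E : (A→(A→B))→(A→B)`. -/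
inductive FREfullThm : Pf → Prop
  | ax1 (A B : Pf) : FREfullThm (A.imp (A.or B))
  | ax2 (A B : Pf) : FREfullThm (B.imp (A.or B))
  | ax3 (A B : Pf) : FREfullThm ((A.and B).imp A)
  | ax4 (A B : Pf) : FREfullThm ((A.and B).imp B)
  | ax7 (A B C : Pf) : FREfullThm ((A.and (B.or C)).imp ((A.and B).or (A.and C)))
  | ax8 (A B C : Pf) : FREfullThm (((A.imp B).and (B.imp C)).imp (A.imp C))
  | ax9 (A B C : Pf) : FREfullThm (((A.imp B).and (A.imp C)).imp (A.imp (B.and C)))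
  | ax10 (A : Pf) : FREfullThm (A.imp A)
  | ax11 (A B C : Pf) : FREfullThm (((A.imp C).and (B.imp C)).imp ((A.or B).imp C))
  | adj {A B : Pf} : FREfullThm A → FREfullThm B → FREfullThm (A.and B)
  | mp {A B : Pf} : FREfullThm A → FREfullThm (A.imp B) → FREfullThm B
  | afort {A : Pf} (B : Pf) : FREfullThm A → FREfullThm (B.imp A)
  | axRE (A B : Pf) : FREfullThm ((A.imp (A.imp B)).imp (A.imp B))

namespace FRfullThm
theorem comp {X Y Z : Pf} (h1 : FRfullThm (X.imp Y)) (h2 : FRfullThm (Y.imp Z)) :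
    FRfullThm (X.imp Z) := mp (adj h1 h2) (ax8 X Y Z)
theorem pair {X Y Z : Pf} (h1 : FRfullThm (X.imp Y)) (h2 : FRfullThm (X.imp Z)) :
    FRfullThm (X.imp (Y.and Z)) := mp (adj h1 h2) (ax9 X Y Z)
theorem re (A B : Pf) : FRfullThm ((A.imp (A.imp B)).imp (A.imp B)) := by
  set C := A.imp (A.imp B) with hC
  have t3 : FRfullThm (C.imp ((A.imp A).and C)) := pair (afort C (ax10 A)) (ax10 C)
  have t5 : FRfullThm (C.imp (A.imp (A.and (A.imp B)))) := comp t3 (ax9 A A (A.imp B))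
  have t6 := pair t5 (afort C (axR A B))
  exact comp t6 (ax8 A (A.and (A.imp B)) B)
end FRfullThm

namespace FREfullThm
theorem comp {X Y Z : Pf} (h1 : FREfullThm (X.imp Y)) (h2 : FREfullThm (Y.imp Z)) :
    FREfullThm (X.imp Z) := mp (adj h1 h2) (ax8 X Y Z)
theorem pair {X Y Z : Pf} (h1 : FREfullThm (X.imp Y)) (h2 : FREfullThm (X.imp Z)) :
    FREfullThm (X.imp (Y.and Z)) := mp (adj h1 h2) (ax9 X Y Z)
theorem r (A B : Pf) : FREfullThm ((A.and (A.imp B)).imp B) := by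
  set D := A.and (A.imp B) with hD
  have t3 : FREfullThm (D.imp ((D.imp A).and (A.imp B))) :=
    pair (afort D (ax3 A (A.imp B))) (ax4 A (A.imp B))
  have t5 : FREfullThm (D.imp (D.imp B)) := comp t3 (ax8 D A B)
  exact mp t5 (axRE D B)
end FREfullThm

theorem R_to_RE {A : Pf} (h : FRfullThm A) : FREfullThm A := by
  induction h with
  | ax1 A B => exact .ax1 A B
  | ax2 A B => exact .ax2 A B
  | ax3 A B => exact .ax3 A B
  | ax4 A B => exact .ax4 A B
  | ax7 A B C => exact .ax7 A B C
  | ax8 A B C => exact .ax8 A B C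
  | ax9 A B C => exact .ax9 A B C
  | ax10 A => exact .ax10 A
  | ax11 A B C => exact .ax11 A B C
  | adj _ _ ih1 ih2 => exact .adj ih1 ih2
  | mp _ _ ih1 ih2 => exact .mp ih1 ih2
  | afort B _ ih => exact .afort B ih
  | axR A B => exact FREfullThm.r A B

theorem RE_to_R {A : Pf} (h : FREfullThm A) : FRfullThm A := by
  induction h with
  | ax1 A B => exact .ax1 A B
  | ax2 A B => exact .ax2 A B
  | ax3 A B => exact .ax3 A B
  | ax4 A B => exact .ax4 A B
  | ax7 A B C => exact .ax7 A B C
  | ax8 A B C => exact .ax8 A B C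
  | ax9 A B C => exact .ax9 A B C
  | ax10 A => exact .ax10 A
  | ax11 A B C => exact .ax11 A B C
  | adj _ _ ih1 ih2 => exact .adj ih1 ih2
  | mp _ _ ih1 ih2 => exact .mp ih1 ih2
  | afort B _ ih => exact .afort B ih
  | axRE A B => exact FRfullThm.re A B

/-- The axiom schemes `R` and `R_E` are equivalent over `F`: the logics `F + R` and
`F + R_E` have the same theorems. -/
theorem R_equiv_RE (A : Pf) : FRfullThm A ↔ FREfullThm A := by
  exact ⟨R_to_RE, RE_to_R⟩
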